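/- Let Z be a totally positive 6×n real matrix, and let V, V′ ⊆ ℝ^n be distinct 2-dimensional totally nonnegative subspaces, both of which are orthodox. Then Z(V) ≠ Z(V′). -/

import Mathlib

/-!
Pair a vector `u` in the kernel of a totally positive `(k+1) × n` matrix `Z` with the vector
`m j = det Z[j, t₁, …, t_k]` (`t` increasing). Then `m` lies in the row space of `Z`, so
`∑ m j u j = 0`; `m` vanishes on the `tᵢ` and has sign `(-1)^#{i | tᵢ < j}` elsewhere. So if `u`
has that sign pattern off the `tᵢ`, it vanishes there, and then on the `tᵢ` as well. For `k = 5`,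
with `t` two dominoes followed by the last coordinate, the pattern is "nonnegative".

If `Z(V) = Z(V')` and `w` is one of the standard basis vectors of `V'`, then `Z w = Z (a d + b e)`
with `d, e` the standard basis of `V`. Off the last coordinate, `a d + b e - w` is a combination of
three nonnegative vectors, each supported on two dominoes. Two of the three coefficients have the
same sign, so up to sign the vector is nonnegative off one domino pair and the last coordinate,
hence zero. Thus `V' ≤ V`, and `V = V'` by symmetry.
-/

/-- `d` is an `i`-domino (0-based indices). -/
def IsDominoAt {n : ℕ} (i : Fin n) (d : Fin n → ℝ) : Prop :=
  if h : (i : ℕ) + 1 < n then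
    0 < d i * d ⟨(i : ℕ) + 1, h⟩ ∧
      ∀ j : Fin n, (j : ℕ) ≠ (i : ℕ) → (j : ℕ) ≠ (i : ℕ) + 1 → d j = 0
  else
    d i ≠ 0 ∧ ∀ j : Fin n, j ≠ i → d j = 0

/-- A nonzero domino. -/
def IsDomino {n : ℕ} (d : Fin n → ℝ) : Prop := ∃ i : Fin n, IsDominoAt i d

/-- A positive domino with index `i`. -/
def IsPosDominoAt {n : ℕ} (i : Fin n) (d : Fin n → ℝ) : Prop :=
  IsDominoAt i d ∧ 0 < d i

/-- `barVec v` is `v` with its last coordinate replaced by `0`. -/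
def barVec {n : ℕ} (v : Fin n → ℝ) : Fin n → ℝ :=
  fun j => if (j : ℕ) = n - 1 then 0 else v j

/-- All maximal minors of `A` are nonnegative. -/
def MinorsNonneg {k n : ℕ} (A : Matrix (Fin k) (Fin n) ℝ) : Prop :=
  ∀ f : Fin k → Fin n, StrictMono f → 0 ≤ (A.submatrix id f).det

/-- All maximal (`a × a`) minors of the `a × n` matrix `Z` are positive. -/
def MinorsPos {a n : ℕ} (Z : Matrix (Fin a) (Fin n) ℝ) : Prop :=
  ∀ f : Fin a → Fin n, StrictMono f → 0 < (Z.submatrix id f).det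

/-- `V` is a `k`-dimensional totally nonnegative subspace of `ℝ^n`. -/
def IsTNNSubspace (k n : ℕ) (V : Submodule ℝ (Fin n → ℝ)) : Prop :=
  ∃ A : Matrix (Fin k) (Fin n) ℝ,
    LinearIndependent ℝ (fun i => A i) ∧
    Submodule.span ℝ (Set.range fun i => A i) = V ∧
    MinorsNonneg A

/-- `V` is orthodox with standard basis vectors `d, e` and fundamental dominoes
`d1, d2, d3, d4`: the `dᵢ` are linearly independent positive dominoes with 0-based
indices `i1 + 1 < i2 ≤ i3 < i4 - 1` and `i4 ≤ n - 3` (1-based: `i_4 ≤ n - 2`),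
`V = span{d, e}`, `d̄ = d1 + d2` with `d` negative in its last coordinate, and
`ē = d3 + d4` with `e` positive in its last coordinate. -/
def OrthodoxWith {n : ℕ} (V : Submodule ℝ (Fin n → ℝ))
    (d e d1 d2 d3 d4 : Fin n → ℝ) : Prop :=
  (∃ i1 i2 i3 i4 : Fin n,
    IsPosDominoAt i1 d1 ∧ IsPosDominoAt i2 d2 ∧ IsPosDominoAt i3 d3 ∧
    IsPosDominoAt i4 d4 ∧
    (i1 : ℕ) + 1 < (i2 : ℕ) ∧ (i2 : ℕ) ≤ (i3 : ℕ) ∧ (i3 : ℕ) + 1 < (i4 : ℕ) ∧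
    (i4 : ℕ) + 3 ≤ n) ∧
  LinearIndependent ℝ ![d1, d2, d3, d4] ∧
  V = Submodule.span ℝ {d, e} ∧
  barVec d = d1 + d2 ∧ (∀ j : Fin n, (j : ℕ) = n - 1 → d j < 0) ∧
  barVec e = d3 + d4 ∧ (∀ j : Fin n, (j : ℕ) = n - 1 → 0 < e j)

/-- `V` is deviant with standard basis vectors `d, e` and fundamental dominoes
`d1, d2, d3, d4`: the `dᵢ` are linearly independent positive dominoes with 0-based
indices `i1 < i2`, `i2 + 1 < i3 ≤ i4 ≤ n - 3` (1-based: `i_4 ≤ n - 2`),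
`V = span{d, e}`, `d̄ = d1 - d4` with `d` negative in its last coordinate, and
`e = d1 + d2 + d3`. -/
def DeviantWith {n : ℕ} (V : Submodule ℝ (Fin n → ℝ))
    (d e d1 d2 d3 d4 : Fin n → ℝ) : Prop :=
  (∃ i1 i2 i3 i4 : Fin n,
    IsPosDominoAt i1 d1 ∧ IsPosDominoAt i2 d2 ∧ IsPosDominoAt i3 d3 ∧
    IsPosDominoAt i4 d4 ∧
    (i1 : ℕ) < (i2 : ℕ) ∧ (i2 : ℕ) + 1 < (i3 : ℕ) ∧ (i3 : ℕ) ≤ (i4 : ℕ) ∧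
    (i4 : ℕ) + 3 ≤ n) ∧
  LinearIndependent ℝ ![d1, d2, d3, d4] ∧
  V = Submodule.span ℝ {d, e} ∧
  barVec d = d1 - d4 ∧ (∀ j : Fin n, (j : ℕ) = n - 1 → d j < 0) ∧
  e = d1 + d2 + d3

/-- `V` is orthodox (for some choice of data). -/
def IsOrthodox {n : ℕ} (V : Submodule ℝ (Fin n → ℝ)) : Prop :=
  ∃ d e d1 d2 d3 d4 : Fin n → ℝ, OrthodoxWith V d e d1 d2 d3 d4

/-- `V` is deviant (for some choice of data). -/
def IsDeviant {n : ℕ} (V : Submodule ℝ (Fin n → ℝ)) : Prop :=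
  ∃ d e d1 d2 d3 d4 : Fin n → ℝ, DeviantWith V d e d1 d2 d3 d4

open Finset Matrix

theorem Function.Injective.update_of_notMem_range {α β : Type*} [DecidableEq α] {f : α → β}
    (hf : Function.Injective f) (a : α) {b : β} (hb : b ∉ Set.range f) :
    Function.Injective (Function.update f a b) := by
  intro x y hxy
  rcases eq_or_ne x a with hx | hx <;> rcases eq_or_ne y a with hy | hy
  · rw [hx, hy]
  · rw [hx, Function.update_self, Function.update_of_ne hy] at hxy
    exact (hb ⟨y, hxy.symm⟩).elim
  · rw [hy, Function.update_of_ne hx, Function.update_self] at hxy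
    exact (hb ⟨x, hxy⟩).elim
  · rw [Function.update_of_ne hx, Function.update_of_ne hy] at hxy
    exact hf hxy

section TotallyPositive

variable {k n : ℕ}

theorem Monotone.coe_lt_card_filter_lt_iff {t : Fin k → Fin n} (ht : Monotone t) (j : Fin n)
    (i : Fin k) : (i : ℕ) < #{i' | t i' < j} ↔ t i < j := by
  constructor
  · intro hi
    by_contra hij
    have hsub : ({i' | t i' < j} : Finset (Fin k)) ⊆ Iio i := fun i' hi' => by
      simp only [mem_filter, mem_univ, true_and] at hi'
      exact mem_Iio.2 (lt_of_not_ge fun h => hij ((ht h).trans_lt hi'))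
    have := card_le_card hsub
    rw [Fin.card_Iio] at this
    omega
  · intro hij
    have hsub : Iic i ⊆ ({i' | t i' < j} : Finset (Fin k)) := fun i' hi' => by
      simp only [mem_filter, mem_univ, true_and]
      exact (ht (mem_Iic.1 hi')).trans_lt hij
    have := card_le_card hsub
    rw [Fin.card_Iic] at this
    omega

theorem Matrix.det_submatrix_cons_eq_vecMul {R : Type*} [CommRing R]
    (Z : Matrix (Fin (k + 1)) (Fin n) R) (t : Fin k → Fin n) (j : Fin n) :
    (Z.submatrix id (Fin.cons j t)).det =
      ((fun r : Fin (k + 1) => (-1) ^ (r : ℕ) * (Z.submatrix r.succAbove t).det) ᵥ* Z) j := by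
  rw [det_succ_column_zero]
  simp only [vecMul, dotProduct, submatrix_apply, id_eq, Fin.cons_zero]
  refine sum_congr rfl fun r _ => ?_
  rw [mul_right_comm]
  rfl

theorem Matrix.sum_det_submatrix_cons_mul_eq_zero {R : Type*} [CommRing R]
    (Z : Matrix (Fin (k + 1)) (Fin n) R) (t : Fin k → Fin n) {u : Fin n → R}
    (hu : Z *ᵥ u = 0) : ∑ j, (Z.submatrix id (Fin.cons j t)).det * u j = 0 := by
  simp_rw [det_submatrix_cons_eq_vecMul]
  rw [← dotProduct, ← dotProduct_mulVec, hu, dotProduct_zero]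

theorem MinorsPos.det_submatrix_ne_zero {Z : Matrix (Fin k) (Fin n) ℝ} (hZ : MinorsPos Z)
    {g : Fin k → Fin n} (hg : Function.Injective g) : (Z.submatrix id g).det ≠ 0 := by
  set σ := Tuple.sort g
  have hsorted : StrictMono (g ∘ σ) :=
    (Tuple.monotone_sort g).strictMono_of_injective (hg.comp σ.injective)
  have hperm : Z.submatrix id g = (Z.submatrix id (g ∘ σ)).submatrix id σ.symm := by
    ext r i
    simp
  rw [hperm, det_permute']
  exact mul_ne_zero (by simp) (hZ _ hsorted).ne'

theorem MinorsPos.neg_one_pow_mul_det_submatrix_cons_pos {Z : Matrix (Fin (k + 1)) (Fin n) ℝ}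
    (hZ : MinorsPos Z) {t : Fin k → Fin n} (ht : StrictMono t) {j : Fin n}
    (hj : j ∉ Set.range t) :
    0 < (-1) ^ #{i | t i < j} * (Z.submatrix id (Fin.cons j t)).det := by
  set c : Fin (k + 1) := ⟨#{i | t i < j}, Nat.lt_succ_of_le (card_le_univ _ |>.trans_eq
    (Fintype.card_fin k))⟩
  have hlt : ∀ i, i.castSucc < c ↔ t i < j := ht.monotone.coe_lt_card_filter_lt_iff j
  have hsorted : StrictMono (c.insertNth j t) := by
    refine (Fin.strictMono_insertNth_iff c j t).2 ⟨ht, fun i hi => (hlt i).1 hi, fun i hi => ?_⟩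
    refine lt_of_le_of_ne (not_lt.1 fun h => ?_) fun h => hj ⟨i, h.symm⟩
    exact (not_lt.2 hi) ((hlt i).2 h)
  -- `c.insertNth j t` is `Fin.cons j t` sorted; sorting costs the sign of `c.cycleRange`.
  have hperm : Z.submatrix id (Fin.cons j t) =
      (Z.submatrix id (c.insertNth j t)).submatrix id c.cycleRange.symm := by
    rw [submatrix_submatrix, Function.comp_id, Fin.insertNth_comp_cycleRange_symm]
  rw [hperm, det_permute', Equiv.Perm.sign_symm, Fin.sign_cycleRange, ← mul_assoc]
  push_cast
  rw [← mul_pow, neg_one_mul, neg_neg, one_pow, one_mul]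
  exact hZ _ hsorted

theorem MinorsPos.eq_zero_of_mulVec_eq_zero {Z : Matrix (Fin (k + 1)) (Fin n) ℝ}
    (hZ : MinorsPos Z) {t : Fin k → Fin n} (ht : StrictMono t) (hkn : k < n) {u : Fin n → ℝ}
    (hu : Z *ᵥ u = 0) (hsign : ∀ j ∉ Set.range t, 0 ≤ (-1) ^ #{i | t i < j} * u j) :
    u = 0 := by
  have hsupp : ∀ j ∉ Set.range t, u j = 0 := by
    have hterm : ∀ j ∈ univ, 0 ≤ (Z.submatrix id (Fin.cons j t)).det * u j := fun j _ => by
      by_cases hj : j ∈ Set.range t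
      · obtain ⟨i, rfl⟩ := hj
        rw [det_zero_of_column_eq (Fin.succ_ne_zero i).symm (fun r => rfl), zero_mul]
      · have := mul_nonneg (hZ.neg_one_pow_mul_det_submatrix_cons_pos ht hj).le (hsign j hj)
        rwa [mul_mul_mul_comm, ← pow_add, ← two_mul, pow_mul, neg_one_sq, one_pow,
          one_mul] at this
    intro j hj
    have := (sum_eq_zero_iff_of_nonneg hterm).1 (sum_det_submatrix_cons_mul_eq_zero Z t hu) j
      (mem_univ j)
    exact (mul_eq_zero.1 this).resolve_left
      (hZ.det_submatrix_ne_zero (Fin.cons_injective_iff.2 ⟨hj, ht.injective⟩))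
  -- For `x = t i`, trade `t i` for an index `w` outside the range: then `x` carries the only
  -- surviving term of the pairing.
  obtain ⟨w, hw⟩ : ∃ w, w ∉ Set.range t := by
    by_contra! h
    exact hkn.not_ge (by simpa using Fintype.card_le_of_surjective t h)
  funext x
  by_cases hx : x ∈ Set.range t
  swap
  · exact hsupp x hx
  obtain ⟨i, rfl⟩ := hx
  set s := Function.update t i w with hs
  have hxs : t i ∉ Set.range s := by
    rintro ⟨i', hi'⟩
    by_cases h : i' = i
    · exact hw ⟨i, by rw [← hi', h, hs, Function.update_self]⟩
    · rw [hs, Function.update_of_ne h] at hi'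
      exact h (ht.injective hi')
  have hsum := sum_det_submatrix_cons_mul_eq_zero Z s hu
  rw [sum_eq_single (t i) (fun j _ hj => ?_) (by simp)] at hsum
  · exact (mul_eq_zero.1 hsum).resolve_left (hZ.det_submatrix_ne_zero
      (Fin.cons_injective_iff.2 ⟨hxs, ht.injective.update_of_notMem_range i hw⟩))
  by_cases hjt : j ∈ Set.range t
  · obtain ⟨i', rfl⟩ := hjt
    have hi' : i' ≠ i := fun h => hj (h ▸ rfl)
    have hcol : ∀ r, (Z.submatrix id (Fin.cons (t i') s)) r 0 =
        (Z.submatrix id (Fin.cons (t i') s)) r i'.succ := fun r => by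
      simp only [submatrix_apply, id_eq, Fin.cons_zero, Fin.cons_succ, hs,
        Function.update_of_ne hi']
    rw [det_zero_of_column_eq (Fin.succ_ne_zero i').symm hcol, zero_mul]
  · rw [hsupp j hjt, mul_zero]

theorem MinorsPos.eq_zero_of_nonneg_off_two_dominoes {Z : Matrix (Fin 6) (Fin n) ℝ}
    (hZ : MinorsPos Z) (hn : 6 ≤ n) {x y : ℕ} (hxy : x + 1 < y) (hy : y + 3 ≤ n)
    {u : Fin n → ℝ} (hu : Z *ᵥ u = 0)
    (hnonneg : ∀ j : Fin n, (j : ℕ) ∉ ({x, x + 1, y, y + 1, n - 1} : Finset ℕ) → 0 ≤ u j) :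
    u = 0 := by
  set t : Fin 5 → Fin n :=
    ![⟨x, by omega⟩, ⟨x + 1, by omega⟩, ⟨y, by omega⟩, ⟨y + 1, by omega⟩, ⟨n - 1, by omega⟩]
  have ht : StrictMono t := by
    refine Fin.strictMono_iff_lt_succ.2 fun i => ?_
    fin_cases i <;> simp [t, Fin.lt_def] <;> omega
  refine hZ.eq_zero_of_mulVec_eq_zero ht (by omega) hu fun j hj => ?_
  have hjt : (j : ℕ) ∉ ({x, x + 1, y, y + 1, n - 1} : Finset ℕ) := fun h => hj (by
    simp only [mem_insert, mem_singleton] at h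
    rcases h with h | h | h | h | h
    exacts [⟨0, Fin.ext h.symm⟩, ⟨1, Fin.ext h.symm⟩, ⟨2, Fin.ext h.symm⟩, ⟨3, Fin.ext h.symm⟩,
      ⟨4, Fin.ext h.symm⟩])
  have heven : Even #{i | t i < j} := by
    simp only [mem_insert, mem_singleton, not_or] at hjt
    rw [card_filter, Fin.sum_univ_five]
    simp only [t, Fin.lt_def, Matrix.cons_val]
    have := j.isLt
    split_ifs <;> first | decide | omega
  rw [heven.neg_one_pow, one_mul]
  exact hnonneg j hjt

end TotallyPositive

section Dominoes

variable {n : ℕ}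

theorem IsPosDominoAt.apply_eq_zero {i : Fin n} {d : Fin n → ℝ} (h : IsPosDominoAt i d)
    {j : Fin n} (hji : (j : ℕ) ≠ i) (hji' : (j : ℕ) ≠ i + 1) : d j = 0 := by
  have hdom := h.1
  unfold IsDominoAt at hdom
  split_ifs at hdom
  · exact hdom.2 j hji hji'
  · exact hdom.2 j (fun h => hji (congrArg Fin.val h))

theorem IsPosDominoAt.nonneg {i : Fin n} {d : Fin n → ℝ} (h : IsPosDominoAt i d) : 0 ≤ d := by
  intro j
  by_cases hji : (j : ℕ) = i
  · rw [Fin.ext hji]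
    exact h.2.le
  by_cases hji' : (j : ℕ) = i + 1
  · have hdom := h.1
    rw [IsDominoAt, dif_pos (hji' ▸ j.isLt)] at hdom
    rw [show j = ⟨i + 1, hji' ▸ j.isLt⟩ from Fin.ext hji']
    exact (pos_of_mul_pos_right hdom.1 h.2.le).le
  · exact (h.apply_eq_zero hji hji').ge

-- `y + 3 ≤ n` keeps both dominoes off the last coordinate `n - 1`.
def IsNonnegDominoPair (p : Fin n → ℝ) : Prop :=
  0 ≤ p ∧ ∃ x y : ℕ, x + 1 < y ∧ y + 3 ≤ n ∧
    ∀ j : Fin n, (j : ℕ) ∉ ({x, x + 1, y, y + 1} : Finset ℕ) → p j = 0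

theorem IsPosDominoAt.isNonnegDominoPair_add {i i' : Fin n} {d d' : Fin n → ℝ}
    (h : IsPosDominoAt i d) (h' : IsPosDominoAt i' d') (hii' : (i : ℕ) + 1 < i')
    (hi'n : (i' : ℕ) + 3 ≤ n) : IsNonnegDominoPair (d + d') := by
  refine ⟨add_nonneg h.nonneg h'.nonneg, i, i', hii', hi'n, fun j hj => ?_⟩
  simp only [mem_insert, mem_singleton, not_or] at hj
  rw [Pi.add_apply, h.apply_eq_zero hj.1 hj.2.1, h'.apply_eq_zero hj.2.2.1 hj.2.2.2, add_zero]

theorem barVec_apply_of_ne {v : Fin n → ℝ} {j : Fin n} (hj : (j : ℕ) ≠ n - 1) :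
    barVec v j = v j :=
  if_neg hj

theorem barVec_add (v w : Fin n → ℝ) : barVec (v + w) = barVec v + barVec w := by
  funext j
  simp only [barVec, Pi.add_apply]
  split_ifs <;> simp

theorem barVec_smul (a : ℝ) (v : Fin n → ℝ) : barVec (a • v) = a • barVec v := by
  funext j
  simp only [barVec, Pi.smul_apply, smul_eq_mul]
  split_ifs <;> simp

theorem barVec_neg (v : Fin n → ℝ) : barVec (-v) = -barVec v := by
  simpa using barVec_smul (-1) v

theorem barVec_sub (v w : Fin n → ℝ) : barVec (v - w) = barVec v - barVec w := by
  rw [sub_eq_add_neg, barVec_add, barVec_neg, sub_eq_add_neg]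

end Dominoes

section Kernel

variable {n : ℕ} {Z : Matrix (Fin 6) (Fin n) ℝ} {u p q r : Fin n → ℝ} {A B C : ℝ}

theorem MinorsPos.eq_zero_of_barVec_eq_of_nonneg (hZ : MinorsPos Z) (hn : 6 ≤ n)
    (hu : Z *ᵥ u = 0) (hp : 0 ≤ p) (hq : 0 ≤ q) (hr : IsNonnegDominoPair r) (hA : 0 ≤ A)
    (hB : 0 ≤ B) (h : barVec u = A • p + B • q + C • r) : u = 0 := by
  obtain ⟨-, x, y, hxy, hy, hr0⟩ := hr
  refine hZ.eq_zero_of_nonneg_off_two_dominoes hn hxy hy hu fun j hj => ?_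
  simp only [mem_insert, mem_singleton, not_or] at hj
  have hj' : (j : ℕ) ∉ ({x, x + 1, y, y + 1} : Finset ℕ) := by
    simp only [mem_insert, mem_singleton, not_or]
    exact ⟨hj.1, hj.2.1, hj.2.2.1, hj.2.2.2.1⟩
  rw [← barVec_apply_of_ne (v := u) hj.2.2.2.2, h]
  simp only [Pi.add_apply, Pi.smul_apply, smul_eq_mul, hr0 j hj', mul_zero, add_zero]
  exact add_nonneg (mul_nonneg hA (hp j)) (mul_nonneg hB (hq j))

theorem MinorsPos.eq_zero_of_barVec_eq (hZ : MinorsPos Z) (hn : 6 ≤ n) (hu : Z *ᵥ u = 0)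
    (hp : IsNonnegDominoPair p) (hq : IsNonnegDominoPair q) (hr : IsNonnegDominoPair r)
    (h : barVec u = A • p + B • q + C • r) : u = 0 := by
  have key : ∀ {v : Fin n → ℝ} {A B C : ℝ}, Z *ᵥ v = 0 → barVec v = A • p + B • q + C • r →
      (0 ≤ A ∧ 0 ≤ B) ∨ (0 ≤ A ∧ 0 ≤ C) ∨ (0 ≤ B ∧ 0 ≤ C) → v = 0 := by
    rintro v A B C hv h (⟨hA, hB⟩ | ⟨hA, hC⟩ | ⟨hB, hC⟩)
    · exact hZ.eq_zero_of_barVec_eq_of_nonneg hn hv hp.1 hq.1 hr hA hB h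
    · exact hZ.eq_zero_of_barVec_eq_of_nonneg hn hv hp.1 hr.1 hq hA hC (by rw [h]; abel)
    · exact hZ.eq_zero_of_barVec_eq_of_nonneg hn hv hq.1 hr.1 hp hB hC (by rw [h]; abel)
  by_cases hsign : (0 ≤ A ∧ 0 ≤ B) ∨ (0 ≤ A ∧ 0 ≤ C) ∨ (0 ≤ B ∧ 0 ≤ C)
  · exact key hu h hsign
  · have hu' : Z *ᵥ (-u) = 0 := by rw [mulVec_neg, hu, neg_zero]
    refine neg_eq_zero.1 (key (A := -A) (B := -B) (C := -C) hu' ?_ ?_)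
    · rw [barVec_neg, h]
      module
    · simp only [neg_nonneg]
      grind

theorem MinorsPos.mem_span_pair_of_mulVec_mem_map (hZ : MinorsPos Z) (hn : 6 ≤ n)
    {d e w : Fin n → ℝ} (hd : IsNonnegDominoPair (barVec d))
    (he : IsNonnegDominoPair (barVec e)) (hw : IsNonnegDominoPair (barVec w))
    (h : Z *ᵥ w ∈ (Submodule.span ℝ {d, e}).map Z.mulVecLin) :
    w ∈ Submodule.span ℝ {d, e} := by
  obtain ⟨v, hv, hvw⟩ := Submodule.mem_map.1 h
  obtain ⟨a, b, rfl⟩ := Submodule.mem_span_pair.1 hv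
  have hker : Z *ᵥ (a • d + b • e - w) = 0 := by
    rw [mulVec_sub, ← mulVecLin_apply, hvw, sub_self]
  have hbar : barVec (a • d + b • e - w) =
      a • barVec d + b • barVec e + (-1 : ℝ) • barVec w := by
    rw [barVec_sub, barVec_add, barVec_smul, barVec_smul, neg_one_smul, sub_eq_add_neg]
  rw [← sub_eq_zero.1 (hZ.eq_zero_of_barVec_eq hn hker hd he hw hbar)]
  exact hv

end Kernel

section Orthodox

variable {n : ℕ} {V : Submodule ℝ (Fin n → ℝ)} {d e d1 d2 d3 d4 : Fin n → ℝ}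

theorem OrthodoxWith.eq_span (h : OrthodoxWith V d e d1 d2 d3 d4) :
    V = Submodule.span ℝ {d, e} :=
  h.2.2.1

theorem OrthodoxWith.seven_le (h : OrthodoxWith V d e d1 d2 d3 d4) : 7 ≤ n := by
  obtain ⟨⟨i1, i2, i3, i4, -, -, -, -, h12, h23, h34, h4n⟩, -⟩ := h
  omega

theorem OrthodoxWith.isNonnegDominoPair_barVec_left (h : OrthodoxWith V d e d1 d2 d3 d4) :
    IsNonnegDominoPair (barVec d) := by
  obtain ⟨⟨i1, i2, i3, i4, h1, h2, -, -, h12, h23, h34, h4n⟩, -, -, hd, -⟩ := h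
  rw [hd]
  exact h1.isNonnegDominoPair_add h2 h12 (by omega)

theorem OrthodoxWith.isNonnegDominoPair_barVec_right (h : OrthodoxWith V d e d1 d2 d3 d4) :
    IsNonnegDominoPair (barVec e) := by
  obtain ⟨⟨i1, i2, i3, i4, -, -, h3, h4, -, -, h34, h4n⟩, -, -, -, -, he, -⟩ := h
  rw [he]
  exact h3.isNonnegDominoPair_add h4 h34 h4n

theorem OrthodoxWith.le_of_map_le {Z : Matrix (Fin 6) (Fin n) ℝ} (hZ : MinorsPos Z)
    (hV : OrthodoxWith V d e d1 d2 d3 d4) {W : Submodule ℝ (Fin n → ℝ)}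
    {d' e' d1' d2' d3' d4' : Fin n → ℝ} (hW : OrthodoxWith W d' e' d1' d2' d3' d4')
    (hmap : W.map Z.mulVecLin ≤ V.map Z.mulVecLin) : W ≤ V := by
  have hZw : ∀ w ∈ ({d', e'} : Set (Fin n → ℝ)), Z *ᵥ w ∈ V.map Z.mulVecLin := fun w hw =>
    hmap (Submodule.mem_map_of_mem (hW.eq_span ▸ Submodule.subset_span hw))
  rw [hW.eq_span, Submodule.span_le]
  intro w hw
  have hw' : IsNonnegDominoPair (barVec w) := by
    rcases hw with rfl | rfl
    exacts [hW.isNonnegDominoPair_barVec_left, hW.isNonnegDominoPair_barVec_right]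
  have h6 : 6 ≤ n := by linarith [hV.seven_le]
  rw [hV.eq_span] at hZw ⊢
  exact hZ.mem_span_pair_of_mulVec_mem_map h6 hV.isNonnegDominoPair_barVec_left
    hV.isNonnegDominoPair_barVec_right hw' (hZw w hw)

end Orthodox

theorem orthodox_vs_orthodox_general (n : ℕ) (Z : Matrix (Fin 6) (Fin n) ℝ)
    (hZ : MinorsPos Z) (V V' : Submodule ℝ (Fin n → ℝ)) (hne : V ≠ V')
    (hVo : IsOrthodox V) (hV'o : IsOrthodox V') :
    V.map Z.mulVecLin ≠ V'.map Z.mulVecLin := by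
  intro hmap
  obtain ⟨d, e, d1, d2, d3, d4, hV⟩ := hVo
  obtain ⟨d', e', d1', d2', d3', d4', hV'⟩ := hV'o
  exact hne (le_antisymm (hV'.le_of_map_le hZ hV hmap.le) (hV.le_of_map_le hZ hV' hmap.ge))

/-- Lemma 10.10: the images under a totally positive `6 × n` matrix of two distinct
orthodox 2-dimensional totally nonnegative subspaces are distinct. -/
theorem orthodox_vs_orthodox (n : ℕ) (Z : Matrix (Fin 6) (Fin n) ℝ)
    (hZ : MinorsPos Z) (V V' : Submodule ℝ (Fin n → ℝ)) (hne : V ≠ V')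
    (hV : IsTNNSubspace 2 n V) (hV' : IsTNNSubspace 2 n V')
    (hVo : IsOrthodox V) (hV'o : IsOrthodox V') :
    V.map Z.mulVecLin ≠ V'.map Z.mulVecLin :=
  orthodox_vs_orthodox_general n Z hZ V V' hne hVo hV'o
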